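/- (Theorem 2, lower Shimogaki index) Let ψ ∈ Ψ(a,b) and G = G(ψ; a,b), with fundamental function φ(s) = sup_{p ∈ (a,b)} s^{1/p}/ψ(p) and dilation function M_G(t) = sup_{s>0} φ(st)/φ(s). Then the lower Shimogaki index β⁻(G) = lim_{t→0⁺} (log M_G(t))/(log t) exists and equals 1/b; in particular β⁻(G) = 1/b < 1/a = β⁺(G). -/

import Mathlib

noncomputable section

open MeasureTheory Filter Set Topology
open scoped ENNReal NNReal

/-- The set of exponents `p` with `a < p < b` (where `b : ℝ≥0∞` may be `∞`). -/
def expSet (a : ℝ) (b : ℝ≥0∞) : Set ℝ := {p : ℝ | a < p ∧ ENNReal.ofReal p < b}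

/-- The filter of real exponents `p` tending to `b` from below (`p → b⁻`);
when `b = ∞` this amounts to `p → ∞`. -/
def atBbelow (b : ℝ≥0∞) : Filter ℝ :=
  Filter.comap ENNReal.ofReal (nhdsWithin b (Set.Iio b))

/-- The class `EΨ(a,b)`: continuous `ψ` on `(a,b)` with `ψ(p) ≥ 1` and `ψ(b-0) = ∞`. -/
def IsEPsi (a : ℝ) (b : ℝ≥0∞) (ψ : ℝ → ℝ) : Prop :=
  ContinuousOn ψ (expSet a b) ∧ (∀ p ∈ expSet a b, 1 ≤ ψ p) ∧
    Filter.Tendsto ψ (atBbelow b) Filter.atTop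

/-- Norm of the Bilateral Grand Lebesgue space `G(ψ; a, b)` over a measure `μ`:
`‖f‖_{G(ψ)} = sup_{p ∈ (a,b)} ‖f‖_{L^p(μ)} / ψ(p)`, with values in `ℝ≥0∞`. -/
def GNorm {α : Type*} [MeasurableSpace α] (μ : Measure α) (a : ℝ) (b : ℝ≥0∞)
    (ψ : ℝ → ℝ) (f : α → ℝ) : ℝ≥0∞ :=
  ⨆ p ∈ expSet a b, eLpNorm f (ENNReal.ofReal p) μ / ENNReal.ofReal (ψ p)

/-- The class `Ψ(a,b)` (relative to a measure `μ`): positive continuous `ψ` on `(a,b)`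
with `ψ(b-0) = ∞`, admitting a representation `ψ(p) = ‖f‖_{L^p(μ)}` for `p ∈ (a,b)`, where
the measurable `f` lies in `L^p(μ)` for all `p ∈ (a,b)`. -/
def IsPsi {α : Type*} [MeasurableSpace α] (μ : Measure α) (a : ℝ) (b : ℝ≥0∞)
    (ψ : ℝ → ℝ) : Prop :=
  ContinuousOn ψ (expSet a b) ∧ (∀ p ∈ expSet a b, 0 < ψ p) ∧
    Filter.Tendsto ψ (atBbelow b) Filter.atTop ∧
    ∃ f : α → ℝ, AEStronglyMeasurable f μ ∧
      ∀ p ∈ expSet a b, eLpNorm f (ENNReal.ofReal p) μ = ENNReal.ofReal (ψ p)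

/-- The fundamental function `φ(G(ψ;a,b), s) = sup_{p ∈ (a,b)} s^{1/p}/ψ(p)`, real-valued. -/
def fundR (a : ℝ) (b : ℝ≥0∞) (ψ : ℝ → ℝ) (s : ℝ) : ℝ :=
  ⨆ p : expSet a b, s ^ (1 / (p : ℝ)) / ψ p

/-- The fundamental function `φ(G(ψ;a,b), δ) = sup_{p ∈ (a,b)} δ^{1/p}/ψ(p)`, `ℝ≥0∞`-valued. -/
def fundE (a : ℝ) (b : ℝ≥0∞) (ψ : ℝ → ℝ) (δ : ℝ≥0∞) : ℝ≥0∞ :=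
  ⨆ p ∈ expSet a b, δ ^ (1 / p) / ENNReal.ofReal (ψ p)

/-- The dilation function `M_G(t) = sup_{s > 0} φ(st)/φ(s)` built from the fundamental
function `φ(s) = sup_{p ∈ (a,b)} s^{1/p}/ψ(p)` of `G(ψ; a,b)`. -/
def MG (a : ℝ) (b : ℝ≥0∞) (ψ : ℝ → ℝ) (t : ℝ) : ℝ :=
  ⨆ s : Set.Ioi (0 : ℝ), fundR a b ψ ((s : ℝ) * t) / fundR a b ψ (s : ℝ)

/-! The dilation function is computed exactly: `M_G(t) = t^{1/b}` for `t ≤ 1` and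
`M_G(t) = t^{1/a}` for `t ≥ 1`. The upper bound is `φ(st) ≤ (sup_p t^{1/p}) φ(s)`. For the lower
bound, iterating the dilation gives `t^{n/p}/ψ(p) ≤ φ(tⁿ) ≤ M_G(t)ⁿ φ(1)` for all `n`, which forces
`t^{1/p} ≤ M_G(t)` for every `p ∈ (a,b)`; as `1/p` fills `(1/b, 1/a)` the bounds meet. Both steps
need `φ` finite and positive, i.e. `ψ` bounded below by a positive constant on `(a,b)`, which holds
because `ψ(p) = ‖f‖_p` with `f ≠ 0`. -/

section LpLowerBound

variable {α E : Type*} [MeasurableSpace α] [NormedAddCommGroup E] {μ : Measure α}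

lemma ENNReal.min_one_rpow_le_rpow (x : ℝ≥0∞) {q r : ℝ} (hq : 0 < q) (hqr : q ≤ r) :
    min 1 (x ^ r) ≤ x ^ q := by
  rcases le_total x 1 with hx | hx
  · exact (min_le_right _ _).trans (ENNReal.rpow_le_rpow_of_exponent_ge hx hqr)
  · exact (min_le_left _ _).trans (ENNReal.one_le_rpow hx hq)

lemma exists_measure_le_enorm_ne_zero {f : α → E} (hf : ¬ f =ᵐ[μ] 0) :
    ∃ ε : ℝ≥0∞, ε ≠ 0 ∧ μ {x | ε ≤ ‖f x‖ₑ} ≠ 0 := by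
  have hcover : {x | f x ≠ 0} ⊆ ⋃ n : ℕ, {x | (n : ℝ≥0∞)⁻¹ ≤ ‖f x‖ₑ} := fun x hx =>
    mem_iUnion.2 ((ENNReal.exists_inv_nat_lt (enorm_ne_zero.2 hx)).imp fun _ => le_of_lt)
  have hsupp : μ {x | f x ≠ 0} ≠ 0 := by rwa [Filter.EventuallyEq, ae_iff] at hf
  obtain ⟨n, hn⟩ := exists_measure_pos_of_not_measure_iUnion_null
    (fun h => hsupp (measure_mono_null hcover h))
  exact ⟨(n : ℝ≥0∞)⁻¹, ENNReal.inv_ne_zero.2 (ENNReal.natCast_ne_top n), hn.ne'⟩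

/-- By Chebyshev, `‖f‖_p ≥ ε μ{ε ≤ ‖f‖}^{1/p} ≥ ε min 1 (μ{ε ≤ ‖f‖}^{1/a})` for `p ≥ a`. -/
lemma exists_ne_zero_forall_le_eLpNorm {f : α → E} (hf : AEStronglyMeasurable f μ)
    (hf0 : ¬ f =ᵐ[μ] 0) {a : ℝ} (ha : 0 < a) :
    ∃ c : ℝ≥0∞, c ≠ 0 ∧ ∀ p : ℝ, a ≤ p → c ≤ eLpNorm f (ENNReal.ofReal p) μ := by
  obtain ⟨ε, hε, hA⟩ := exists_measure_le_enorm_ne_zero hf0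
  set A := {x | ε ≤ ‖f x‖ₑ}
  refine ⟨ε * min 1 (μ A ^ (1 / a)), mul_ne_zero hε ?_, fun p hap => ?_⟩
  · simp [ENNReal.rpow_eq_zero_iff, hA, ha.le]
  have hp : 0 < p := ha.trans_le hap
  have hchebyshev : ε ^ p * μ A ≤ eLpNorm f (ENNReal.ofReal p) μ ^ p := by
    have := mul_meas_ge_le_pow_eLpNorm' μ (by simpa using hp) ENNReal.ofReal_ne_top hf ε
    rwa [ENNReal.toReal_ofReal hp.le] at this
  calc ε * min 1 (μ A ^ (1 / a))
      ≤ ε * μ A ^ (1 / p) := by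
        gcongr; exact ENNReal.min_one_rpow_le_rpow _ (by positivity) (by gcongr)
    _ ≤ eLpNorm f (ENNReal.ofReal p) μ := by
        rwa [← ENNReal.rpow_le_rpow_iff hp, ENNReal.mul_rpow_of_nonneg _ _ hp.le,
          ← ENNReal.rpow_mul, one_div_mul_cancel hp.ne', ENNReal.rpow_one]

end LpLowerBound

section ExponentInterval

variable {a : ℝ} {b : ℝ≥0∞}

lemma one_div_mem_Ioo_of_mem_expSet (ha : 0 < a) {p : ℝ} (hp : p ∈ expSet a b) :
    1 / p ∈ Ioo b⁻¹.toReal (1 / a) := by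
  obtain ⟨hap, hpb⟩ := hp
  have hp0 : 0 < p := ha.trans hap
  refine ⟨?_, one_div_lt_one_div_of_lt ha hap⟩
  rcases eq_or_ne b ⊤ with rfl | hb
  · simpa using hp0
  · rw [ENNReal.toReal_inv, ← one_div]
    exact one_div_lt_one_div_of_lt hp0 ((ENNReal.ofReal_lt_iff_lt_toReal hp0.le hb).1 hpb)

lemma one_div_mem_expSet_of_mem_Ioo (hb0 : b ≠ 0) {x : ℝ} (hx : x ∈ Ioo b⁻¹.toReal (1 / a)) :
    1 / x ∈ expSet a b := by
  obtain ⟨hbx, hxa⟩ := hx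
  have hx0 : 0 < x := ENNReal.toReal_nonneg.trans_lt hbx
  refine ⟨?_, ?_⟩
  · rcases le_or_gt a 0 with ha | ha
    · exact ha.trans_lt (one_div_pos.2 hx0)
    · simpa using one_div_lt_one_div_of_lt hx0 hxa
  · rcases eq_or_ne b ⊤ with rfl | hb
    · simp
    · rw [ENNReal.toReal_inv] at hbx
      rw [ENNReal.ofReal_lt_iff_lt_toReal (one_div_pos.2 hx0).le hb]
      simpa using inv_lt_of_inv_lt₀ (ENNReal.toReal_pos hb0 hb) hbx

lemma toReal_inv_lt_one_div (ha : 0 < a) (hab : ENNReal.ofReal a < b) :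
    b⁻¹.toReal < 1 / a := by
  rcases eq_or_ne b ⊤ with rfl | hb
  · simpa using ha
  · rw [ENNReal.toReal_inv, ← one_div]
    exact one_div_lt_one_div_of_lt ha ((ENNReal.ofReal_lt_iff_lt_toReal ha.le hb).1 hab)

lemma expSet_nonempty (ha : 0 < a) (hab : ENNReal.ofReal a < b) : (expSet a b).Nonempty :=
  ⟨_, one_div_mem_expSet_of_mem_Ioo (ne_bot_of_gt hab)
    (exists_between (toReal_inv_lt_one_div ha hab)).choose_spec⟩

end ExponentInterval

lemma IsPsi.exists_pos_le {α : Type*} [MeasurableSpace α] {μ : Measure α} {a : ℝ} {b : ℝ≥0∞}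
    {ψ : ℝ → ℝ} (hψ : IsPsi μ a b ψ) (ha : 0 < a) (hab : ENNReal.ofReal a < b) :
    ∃ m : ℝ, 0 < m ∧ ∀ p ∈ expSet a b, m ≤ ψ p := by
  obtain ⟨-, hψpos, -, f, hf, hfψ⟩ := hψ
  obtain ⟨p₀, hp₀⟩ := expSet_nonempty ha hab
  have hf0 : ¬ f =ᵐ[μ] 0 := fun h => by
    have := hfψ p₀ hp₀
    rw [eLpNorm_congr_ae h, eLpNorm_zero, eq_comm, ENNReal.ofReal_eq_zero] at this
    exact (hψpos p₀ hp₀).not_ge this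
  obtain ⟨c, hc0, hc⟩ := exists_ne_zero_forall_le_eLpNorm hf hf0 ha
  refine ⟨(min c 1).toReal, ENNReal.toReal_pos (by simp [hc0]) (by simp), fun p hp => ?_⟩
  rw [← ENNReal.ofReal_le_ofReal_iff (hψpos p hp).le, ENNReal.ofReal_toReal (by simp),
    ← hfψ p hp]
  exact (min_le_left _ _).trans (hc p hp.1.le)

lemma Real.rpow_le_max_rpow {s x y z : ℝ} (hs : 0 < s) (hxy : x ≤ y) (hyz : y ≤ z) :
    s ^ y ≤ max (s ^ x) (s ^ z) := by
  rcases le_total s 1 with h | h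
  · exact le_max_of_le_left (Real.rpow_le_rpow_of_exponent_ge hs h hxy)
  · exact le_max_of_le_right (Real.rpow_le_rpow_of_exponent_le h hyz)

section FundamentalFunction

variable {a : ℝ} {b : ℝ≥0∞} {ψ : ℝ → ℝ} {m s t T : ℝ}

lemma fundR_bddAbove (ha : 0 < a) (hm0 : 0 < m) (hm : ∀ p ∈ expSet a b, m ≤ ψ p)
    (hs : 0 < s) : BddAbove (range fun p : expSet a b => s ^ (1 / (p : ℝ)) / ψ p) := by
  refine ⟨max (s ^ b⁻¹.toReal) (s ^ (1 / a)) / m, ?_⟩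
  rintro _ ⟨⟨p, hp⟩, rfl⟩
  have hp' := one_div_mem_Ioo_of_mem_expSet ha hp
  exact div_le_div₀ (by positivity) (Real.rpow_le_max_rpow hs hp'.1.le hp'.2.le) hm0 (hm p hp)

lemma le_fundR (ha : 0 < a) (hm0 : 0 < m) (hm : ∀ p ∈ expSet a b, m ≤ ψ p) (hs : 0 < s)
    {p : ℝ} (hp : p ∈ expSet a b) : s ^ (1 / p) / ψ p ≤ fundR a b ψ s :=
  le_ciSup (fundR_bddAbove ha hm0 hm hs) ⟨p, hp⟩

lemma fundR_pos (ha : 0 < a) (hab : ENNReal.ofReal a < b) (hm0 : 0 < m)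
    (hm : ∀ p ∈ expSet a b, m ≤ ψ p) (hs : 0 < s) : 0 < fundR a b ψ s := by
  obtain ⟨p, hp⟩ := expSet_nonempty ha hab
  have hψp : 0 < ψ p := hm0.trans_le (hm p hp)
  exact (by positivity : 0 < s ^ (1 / p) / ψ p).trans_le (le_fundR ha hm0 hm hs hp)

lemma fundR_mul_le (ha : 0 < a) (hab : ENNReal.ofReal a < b) (hm0 : 0 < m)
    (hm : ∀ p ∈ expSet a b, m ≤ ψ p) (hs : 0 < s) (ht : 0 < t)
    (hT : ∀ p ∈ expSet a b, t ^ (1 / p) ≤ T) : fundR a b ψ (s * t) ≤ T * fundR a b ψ s := by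
  have := (expSet_nonempty ha hab).to_subtype
  refine ciSup_le fun ⟨p, hp⟩ => ?_
  have hψp : 0 < ψ p := hm0.trans_le (hm p hp)
  calc (s * t) ^ (1 / p) / ψ p = t ^ (1 / p) * (s ^ (1 / p) / ψ p) := by
        rw [Real.mul_rpow hs.le ht.le]; ring
    _ ≤ T * fundR a b ψ s := mul_le_mul (hT p hp) (le_fundR ha hm0 hm hs hp) (by positivity)
        ((Real.rpow_pos_of_pos ht _).le.trans (hT p hp))

lemma fundR_mul_div_le (ha : 0 < a) (hab : ENNReal.ofReal a < b) (hm0 : 0 < m)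
    (hm : ∀ p ∈ expSet a b, m ≤ ψ p) (hs : 0 < s) (ht : 0 < t)
    (hT : ∀ p ∈ expSet a b, t ^ (1 / p) ≤ T) : fundR a b ψ (s * t) / fundR a b ψ s ≤ T :=
  (div_le_iff₀ (fundR_pos ha hab hm0 hm hs)).2 (fundR_mul_le ha hab hm0 hm hs ht hT)

end FundamentalFunction

section Dilation

variable {a : ℝ} {b : ℝ≥0∞} {ψ : ℝ → ℝ} {m s t T : ℝ}

lemma MG_le (ha : 0 < a) (hab : ENNReal.ofReal a < b) (hm0 : 0 < m)
    (hm : ∀ p ∈ expSet a b, m ≤ ψ p) (ht : 0 < t) (hT : ∀ p ∈ expSet a b, t ^ (1 / p) ≤ T) :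
    MG a b ψ t ≤ T :=
  ciSup_le fun s => fundR_mul_div_le ha hab hm0 hm s.2 ht hT

lemma le_MG (ha : 0 < a) (hab : ENNReal.ofReal a < b) (hm0 : 0 < m)
    (hm : ∀ p ∈ expSet a b, m ≤ ψ p) (hs : 0 < s) (ht : 0 < t) :
    fundR a b ψ (s * t) / fundR a b ψ s ≤ MG a b ψ t := by
  refine le_ciSup (f := fun s : Ioi (0 : ℝ) => fundR a b ψ (s * t) / fundR a b ψ s)
    ⟨max (t ^ b⁻¹.toReal) (t ^ (1 / a)), ?_⟩ ⟨s, hs⟩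
  rintro _ ⟨s', rfl⟩
  refine fundR_mul_div_le ha hab hm0 hm s'.2 ht fun p hp => ?_
  have hp' := one_div_mem_Ioo_of_mem_expSet ha hp
  exact Real.rpow_le_max_rpow ht hp'.1.le hp'.2.le

lemma MG_pos (ha : 0 < a) (hab : ENNReal.ofReal a < b) (hm0 : 0 < m)
    (hm : ∀ p ∈ expSet a b, m ≤ ψ p) (ht : 0 < t) : 0 < MG a b ψ t := by
  have h1 := fundR_pos ha hab hm0 hm one_pos
  have ht' := fundR_pos ha hab hm0 hm (one_mul t ▸ ht)
  exact (div_pos ht' h1).trans_le (le_MG ha hab hm0 hm one_pos ht)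

lemma fundR_pow_le (ha : 0 < a) (hab : ENNReal.ofReal a < b) (hm0 : 0 < m)
    (hm : ∀ p ∈ expSet a b, m ≤ ψ p) (ht : 0 < t) (n : ℕ) :
    fundR a b ψ (t ^ n) ≤ MG a b ψ t ^ n * fundR a b ψ 1 := by
  induction n with
  | zero => simp
  | succ n ih =>
    have htn := pow_pos ht n
    calc fundR a b ψ (t ^ (n + 1)) ≤ MG a b ψ t * fundR a b ψ (t ^ n) := by
          rw [pow_succ]
          exact (div_le_iff₀ (fundR_pos ha hab hm0 hm htn)).1 (le_MG ha hab hm0 hm htn ht)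
      _ ≤ MG a b ψ t * (MG a b ψ t ^ n * fundR a b ψ 1) :=
          mul_le_mul_of_nonneg_left ih (MG_pos ha hab hm0 hm ht).le
      _ = MG a b ψ t ^ (n + 1) * fundR a b ψ 1 := by ring

lemma rpow_le_MG (ha : 0 < a) (hab : ENNReal.ofReal a < b) (hm0 : 0 < m)
    (hm : ∀ p ∈ expSet a b, m ≤ ψ p) (ht : 0 < t) {p : ℝ} (hp : p ∈ expSet a b) :
    t ^ (1 / p) ≤ MG a b ψ t := by
  have hM := MG_pos ha hab hm0 hm ht
  have hψp : 0 < ψ p := hm0.trans_le (hm p hp)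
  by_contra! hlt
  obtain ⟨n, hn⟩ := pow_unbounded_of_one_lt (fundR a b ψ 1 * ψ p)
    ((one_lt_div hM).2 hlt)
  refine hn.not_ge ?_
  have hpow : (t ^ n) ^ (1 / p) / ψ p ≤ MG a b ψ t ^ n * fundR a b ψ 1 :=
    (le_fundR ha hm0 hm (pow_pos ht n) hp).trans (fundR_pow_le ha hab hm0 hm ht n)
  rw [← Real.rpow_pow_comm ht.le, div_le_iff₀ hψp] at hpow
  rw [div_pow, div_le_iff₀ (pow_pos hM n)]
  linarith

/-- The exponents `1/p` fill the open interval `(1/b, 1/a)`, and `x ↦ t^x` is continuous, so the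
bound of `rpow_le_MG` extends to the closed interval. -/
lemma rpow_le_MG_of_mem_Icc (ha : 0 < a) (hab : ENNReal.ofReal a < b) (hm0 : 0 < m)
    (hm : ∀ p ∈ expSet a b, m ≤ ψ p) (ht : 0 < t) {x : ℝ} (hx : x ∈ Icc b⁻¹.toReal (1 / a)) :
    t ^ x ≤ MG a b ψ t := by
  rw [← closure_Ioo (toReal_inv_lt_one_div ha hab).ne] at hx
  refine closure_minimal (fun y hy => ?_)
    (isClosed_le (Real.continuous_const_rpow ht.ne') continuous_const) hx
  simpa using rpow_le_MG ha hab hm0 hm ht (one_div_mem_expSet_of_mem_Ioo (ne_bot_of_gt hab) hy)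

lemma MG_eq_rpow_of_le_one (ha : 0 < a) (hab : ENNReal.ofReal a < b) (hm0 : 0 < m)
    (hm : ∀ p ∈ expSet a b, m ≤ ψ p) (ht0 : 0 < t) (ht1 : t ≤ 1) :
    MG a b ψ t = t ^ b⁻¹.toReal := by
  refine le_antisymm (MG_le ha hab hm0 hm ht0 fun p hp => ?_)
    (rpow_le_MG_of_mem_Icc ha hab hm0 hm ht0 ⟨le_rfl, (toReal_inv_lt_one_div ha hab).le⟩)
  exact Real.rpow_le_rpow_of_exponent_ge ht0 ht1 (one_div_mem_Ioo_of_mem_expSet ha hp).1.le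

lemma MG_eq_rpow_of_one_le (ha : 0 < a) (hab : ENNReal.ofReal a < b) (hm0 : 0 < m)
    (hm : ∀ p ∈ expSet a b, m ≤ ψ p) (ht : 1 ≤ t) :
    MG a b ψ t = t ^ (1 / a) := by
  have ht0 : 0 < t := one_pos.trans_le ht
  refine le_antisymm (MG_le ha hab hm0 hm ht0 fun p hp => ?_)
    (rpow_le_MG_of_mem_Icc ha hab hm0 hm ht0 ⟨(toReal_inv_lt_one_div ha hab).le, le_rfl⟩)
  exact Real.rpow_le_rpow_of_exponent_le ht (one_div_mem_Ioo_of_mem_expSet ha hp).2.le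

end Dilation

lemma Real.log_rpow_div_log {t : ℝ} (ht0 : 0 < t) (ht1 : t ≠ 1) (x : ℝ) :
    Real.log (t ^ x) / Real.log t = x := by
  rw [Real.log_rpow ht0, mul_div_assoc, div_self (Real.log_ne_zero_of_pos_of_ne_one ht0 ht1),
    mul_one]

/-- **Theorem 2, lower Shimogaki index.** Let `ψ ∈ Ψ(a,b)` (over `X = ℝ₊`
with Lebesgue measure) and `G = G(ψ; a,b)`. Then the lower Shimogaki index
`β⁻(G) = lim_{t→0⁺} log M_G(t) / log t` exists and equals `1/b` (which is `0` for `b = ∞`);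
in particular `β⁻(G) = 1/b < 1/a = β⁺(G)`. -/
theorem lower_Shimogaki_index
    (a : ℝ) (b : ℝ≥0∞) (ha : 1 ≤ a) (hab : ENNReal.ofReal a < b)
    (ψ : ℝ → ℝ) (hψ : IsPsi (volume.restrict (Set.Ioi (0 : ℝ))) a b ψ) :
    Tendsto (fun t : ℝ => Real.log (MG a b ψ t) / Real.log t)
        (𝓝[>] (0 : ℝ)) (𝓝 (b⁻¹.toReal)) ∧
      b⁻¹.toReal < 1 / a ∧
      Tendsto (fun t : ℝ => Real.log (MG a b ψ t) / Real.log t) atTop (𝓝 (1 / a)) := by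
  have ha0 : 0 < a := one_pos.trans_le ha
  obtain ⟨m, hm0, hm⟩ := hψ.exists_pos_le ha0 hab
  refine ⟨tendsto_const_nhds.congr' ?_, toReal_inv_lt_one_div ha0 hab,
    tendsto_const_nhds.congr' ?_⟩
  · filter_upwards [Ioo_mem_nhdsGT one_pos] with t ht
    rw [MG_eq_rpow_of_le_one ha0 hab hm0 hm ht.1 ht.2.le,
      Real.log_rpow_div_log ht.1 ht.2.ne]
  · filter_upwards [eventually_gt_atTop 1] with t ht
    rw [MG_eq_rpow_of_one_le ha0 hab hm0 hm ht.le,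
      Real.log_rpow_div_log (one_pos.trans ht) ht.ne']
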